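/- arXiv:2112.08465 — 2 statements merged into one kernel-verified Lean document; each statement's English description precedes it below -/
import Mathlib

section
/- Let (V,⟨·,·⟩) be a real inner product space of dimension n ≥ 4 and let R be an algebraic curvature tensor on V having 2-positive curvature operator of the second kind. Then R has positive sectional curvature, i.e. R(x,y,x,y) > 0 for every pair of orthonormal vectors x,y ∈ V. -/
open scoped RealInnerProductSpace

variable {V : Type*} [NormedAddCommGroup V] [InnerProductSpace ℝ V]

/-- `R` is an algebraic curvature tensor: antisymmetric in the first two slots,
symmetric under exchange of the first and second pairs, and satisfying the
first Bianchi identity. -/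
def IsAlgCurvatureTensor (R : V →ₗ[ℝ] V →ₗ[ℝ] V →ₗ[ℝ] V →ₗ[ℝ] ℝ) : Prop :=
  (∀ x y z w : V, R x y z w = - R y x z w) ∧
  (∀ x y z w : V, R x y z w = R z w x y) ∧
  (∀ x y z w : V, R x y z w + R y z x w + R z x y w = 0)

/-- The Ricci curvature `Ric(x,y) = Σ_j R(x,e_j,y,e_j)` with respect to an
orthonormal basis. -/
noncomputable def ricci {n : ℕ} (b : OrthonormalBasis (Fin n) ℝ V)
    (R : V →ₗ[ℝ] V →ₗ[ℝ] V →ₗ[ℝ] V →ₗ[ℝ] ℝ) (x y : V) : ℝ :=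
  ∑ j, R x (b j) y (b j)

/-- The scalar curvature `S = Σ_{i,j} R_{ijij}`. -/
noncomputable def scalarCurv {n : ℕ} (b : OrthonormalBasis (Fin n) ℝ V)
    (R : V →ₗ[ℝ] V →ₗ[ℝ] V →ₗ[ℝ] V →ₗ[ℝ] ℝ) : ℝ :=
  ∑ i, ∑ j, R (b i) (b j) (b i) (b j)

/-- `φ` is a symmetric bilinear form which is traceless with respect to the
orthonormal basis `b`. -/
def IsTracelessSymForm {n : ℕ} (b : OrthonormalBasis (Fin n) ℝ V)
    (φ : V →ₗ[ℝ] V →ₗ[ℝ] ℝ) : Prop :=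
  (∀ x y : V, φ x y = φ y x) ∧ (∑ i, φ (b i) (b i) = 0)

/-- The inner product `⟨φ,ψ⟩ = Σ_{i,j} φ(e_i,e_j) ψ(e_i,e_j)` of bilinear forms. -/
noncomputable def formInner {n : ℕ} (b : OrthonormalBasis (Fin n) ℝ V)
    (φ ψ : V →ₗ[ℝ] V →ₗ[ℝ] ℝ) : ℝ :=
  ∑ i, ∑ j, φ (b i) (b j) * ψ (b i) (b j)

/-- The curvature operator of the second kind
`R̊(φ,ψ) = Σ_{i,j,k,l} R_{ijkl} φ(e_i,e_l) ψ(e_j,e_k)`. -/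
noncomputable def secondKind {n : ℕ} (b : OrthonormalBasis (Fin n) ℝ V)
    (R : V →ₗ[ℝ] V →ₗ[ℝ] V →ₗ[ℝ] V →ₗ[ℝ] ℝ)
    (φ ψ : V →ₗ[ℝ] V →ₗ[ℝ] ℝ) : ℝ :=
  ∑ i, ∑ j, ∑ k, ∑ l,
    R (b i) (b j) (b k) (b l) * φ (b i) (b l) * ψ (b j) (b k)

/-- `R` has `k`-nonnegative curvature operator of the second kind:
`Σ_{a=1}^k R̊(φ_a,φ_a) ≥ 0` for every orthonormal `k`-tuple of traceless
symmetric bilinear forms. -/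
def kNonnegSecondKind {n : ℕ} (b : OrthonormalBasis (Fin n) ℝ V)
    (R : V →ₗ[ℝ] V →ₗ[ℝ] V →ₗ[ℝ] V →ₗ[ℝ] ℝ) (k : ℕ) : Prop :=
  ∀ φ : Fin k → (V →ₗ[ℝ] V →ₗ[ℝ] ℝ),
    (∀ a, IsTracelessSymForm b (φ a)) →
    (∀ a a', formInner b (φ a) (φ a') = if a = a' then 1 else 0) →
    0 ≤ ∑ a, secondKind b R (φ a) (φ a)

/-- `R` has `k`-positive curvature operator of the second kind:
`Σ_{a=1}^k R̊(φ_a,φ_a) > 0` for every orthonormal `k`-tuple of traceless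
symmetric bilinear forms. -/
def kPosSecondKind {n : ℕ} (b : OrthonormalBasis (Fin n) ℝ V)
    (R : V →ₗ[ℝ] V →ₗ[ℝ] V →ₗ[ℝ] V →ₗ[ℝ] ℝ) (k : ℕ) : Prop :=
  ∀ φ : Fin k → (V →ₗ[ℝ] V →ₗ[ℝ] ℝ),
    (∀ a, IsTracelessSymForm b (φ a)) →
    (∀ a a', formInner b (φ a) (φ a') = if a = a' then 1 else 0) →
    0 < ∑ a, secondKind b R (φ a) (φ a)

/-!
For orthonormal `x, y` the traceless symmetric forms `x ⊗ x - y ⊗ y` and `x ⊗ y + y ⊗ x` are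
orthogonal of the same norm `√2`, and the curvature operator of the second kind takes the value
`2 R(x,y,x,y)` on each of them, so 2-positivity applied to the normalised pair forces
`R(x,y,x,y) > 0`.
-/

lemma OrthonormalBasis.fourLinear_apply_eq_sum {ι : Type*} [Fintype ι]
    (b : OrthonormalBasis ι ℝ V) (R : V →ₗ[ℝ] V →ₗ[ℝ] V →ₗ[ℝ] V →ₗ[ℝ] ℝ) (x y z w : V) :
    R x y z w = ∑ i, ∑ j, ∑ k, ∑ l,
      ⟪b i, x⟫ * ⟪b j, y⟫ * ⟪b k, z⟫ * ⟪b l, w⟫ * R (b i) (b j) (b k) (b l) := by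
  -- expanding one argument at a time keeps the sums nested in the order `i, j, k, l`
  conv_lhs =>
    rw [← b.sum_repr' x]
    simp only [map_sum, map_smul, LinearMap.sum_apply, LinearMap.smul_apply]
    rw [← b.sum_repr' y]
    simp only [map_sum, map_smul, LinearMap.sum_apply, LinearMap.smul_apply]
    rw [← b.sum_repr' z]
    simp only [map_sum, map_smul, LinearMap.sum_apply, LinearMap.smul_apply]
    rw [← b.sum_repr' w]
    simp only [map_sum, map_smul, LinearMap.sum_apply, LinearMap.smul_apply]
  simp only [smul_eq_mul, Finset.mul_sum, mul_assoc]

namespace IsAlgCurvatureTensor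

variable {R : V →ₗ[ℝ] V →ₗ[ℝ] V →ₗ[ℝ] V →ₗ[ℝ] ℝ} (hR : IsAlgCurvatureTensor R)
include hR

lemma apply_self_left (x z w : V) : R x x z w = 0 := by
  linarith [hR.1 x x z w]

lemma apply_swap_right (x y z w : V) : R x y z w = -R x y w z := by
  rw [hR.2.1, hR.1, ← hR.2.1]

end IsAlgCurvatureTensor

noncomputable def rankOneForm (u v : V) : V →ₗ[ℝ] V →ₗ[ℝ] ℝ :=
  (innerₛₗ ℝ u).smulRight (innerₛₗ ℝ v)

@[simp] lemma rankOneForm_apply (u v a c : V) : rankOneForm u v a c = ⟪u, a⟫ * ⟪v, c⟫ := by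
  simp [rankOneForm]

section BasisDependent

variable {n : ℕ} (b : OrthonormalBasis (Fin n) ℝ V)

noncomputable def secondKindₗ (R : V →ₗ[ℝ] V →ₗ[ℝ] V →ₗ[ℝ] V →ₗ[ℝ] ℝ) :
    (V →ₗ[ℝ] V →ₗ[ℝ] ℝ) →ₗ[ℝ] (V →ₗ[ℝ] V →ₗ[ℝ] ℝ) →ₗ[ℝ] ℝ :=
  LinearMap.mk₂ ℝ (secondKind b R)
    (fun _ _ _ => by
      simp only [secondKind, LinearMap.add_apply, mul_add, add_mul, Finset.sum_add_distrib])
    (fun c _ _ => by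
      simp only [secondKind, LinearMap.smul_apply, smul_eq_mul, Finset.mul_sum,
        mul_left_comm _ c, mul_assoc])
    (fun _ _ _ => by
      simp only [secondKind, LinearMap.add_apply, mul_add, Finset.sum_add_distrib])
    (fun c _ _ => by
      simp only [secondKind, LinearMap.smul_apply, smul_eq_mul, Finset.mul_sum,
        mul_left_comm _ c])

@[simp] lemma secondKindₗ_apply (R : V →ₗ[ℝ] V →ₗ[ℝ] V →ₗ[ℝ] V →ₗ[ℝ] ℝ)
    (φ ψ : V →ₗ[ℝ] V →ₗ[ℝ] ℝ) : secondKindₗ b R φ ψ = secondKind b R φ ψ := rfl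

noncomputable def formInnerₗ :
    (V →ₗ[ℝ] V →ₗ[ℝ] ℝ) →ₗ[ℝ] (V →ₗ[ℝ] V →ₗ[ℝ] ℝ) →ₗ[ℝ] ℝ :=
  LinearMap.mk₂ ℝ (formInner b)
    (fun _ _ _ => by
      simp only [formInner, LinearMap.add_apply, add_mul, Finset.sum_add_distrib])
    (fun _ _ _ => by
      simp only [formInner, LinearMap.smul_apply, smul_eq_mul, Finset.mul_sum, mul_assoc])
    (fun _ _ _ => by
      simp only [formInner, LinearMap.add_apply, mul_add, Finset.sum_add_distrib])
    (fun _ _ _ => by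
      simp only [formInner, LinearMap.smul_apply, smul_eq_mul, Finset.mul_sum, mul_left_comm])

@[simp] lemma formInnerₗ_apply (φ ψ : V →ₗ[ℝ] V →ₗ[ℝ] ℝ) :
    formInnerₗ b φ ψ = formInner b φ ψ := rfl

lemma formInner_comm (φ ψ : V →ₗ[ℝ] V →ₗ[ℝ] ℝ) : formInner b φ ψ = formInner b ψ φ := by
  simp only [formInner, mul_comm]

lemma formInner_smul_smul (c : ℝ) (φ ψ : V →ₗ[ℝ] V →ₗ[ℝ] ℝ) :
    formInner b (c • φ) (c • ψ) = c ^ 2 * formInner b φ ψ := by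
  simp only [← formInnerₗ_apply, map_smul, LinearMap.smul_apply, smul_eq_mul]
  ring

lemma secondKind_smul_smul (R : V →ₗ[ℝ] V →ₗ[ℝ] V →ₗ[ℝ] V →ₗ[ℝ] ℝ) (c : ℝ)
    (φ ψ : V →ₗ[ℝ] V →ₗ[ℝ] ℝ) :
    secondKind b R (c • φ) (c • ψ) = c ^ 2 * secondKind b R φ ψ := by
  simp only [← secondKindₗ_apply, map_smul, LinearMap.smul_apply, smul_eq_mul]
  ring

lemma secondKind_rankOneForm (R : V →ₗ[ℝ] V →ₗ[ℝ] V →ₗ[ℝ] V →ₗ[ℝ] ℝ) (u v w z : V) :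
    secondKind b R (rankOneForm u v) (rankOneForm w z) = R u w z v := by
  rw [b.fourLinear_apply_eq_sum R]
  refine Finset.sum_congr rfl fun i _ => Finset.sum_congr rfl fun j _ =>
    Finset.sum_congr rfl fun k _ => Finset.sum_congr rfl fun l _ => ?_
  simp only [rankOneForm_apply, real_inner_comm (b _)]
  ring

lemma formInner_rankOneForm (u v w z : V) :
    formInner b (rankOneForm u v) (rankOneForm w z) = ⟪u, w⟫ * ⟪v, z⟫ := by
  simp only [formInner, rankOneForm_apply, ← b.sum_inner_mul_inner u w,
    ← b.sum_inner_mul_inner v z, Finset.sum_mul_sum]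
  refine Finset.sum_congr rfl fun i _ => Finset.sum_congr rfl fun j _ => ?_
  simp only [real_inner_comm (b _)]
  ring

lemma trace_rankOneForm (u v : V) : ∑ i, rankOneForm u v (b i) (b i) = ⟪u, v⟫ := by
  simp only [rankOneForm_apply, ← b.sum_inner_mul_inner u v, real_inner_comm (b _) v]

-- `map_sub` needs the linear map explicitly: on `V →ₗ[ℝ] V →ₗ[ℝ] ℝ` unification of the bare
-- lemma fails to find the `AddGroup` instance.
lemma formInner_rankOneForm_sub_self (x y : V) :
    formInner b (rankOneForm x x - rankOneForm y y) (rankOneForm x x - rankOneForm y y) =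
      ⟪x, x⟫ ^ 2 - 2 * ⟪x, y⟫ ^ 2 + ⟪y, y⟫ ^ 2 := by
  simp only [← formInnerₗ_apply, map_sub (formInnerₗ b), map_sub (formInnerₗ b _),
    LinearMap.sub_apply]
  simp only [formInnerₗ_apply, formInner_rankOneForm, real_inner_comm y x]
  ring

lemma formInner_rankOneForm_add_self (x y : V) :
    formInner b (rankOneForm x y + rankOneForm y x) (rankOneForm x y + rankOneForm y x) =
      2 * ⟪x, x⟫ * ⟪y, y⟫ + 2 * ⟪x, y⟫ ^ 2 := by
  simp only [← formInnerₗ_apply, map_add, LinearMap.add_apply]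
  simp only [formInnerₗ_apply, formInner_rankOneForm, real_inner_comm y x]
  ring

lemma formInner_rankOneForm_sub_add (x y : V) :
    formInner b (rankOneForm x x - rankOneForm y y) (rankOneForm x y + rankOneForm y x) =
      2 * ⟪x, y⟫ * (⟪x, x⟫ - ⟪y, y⟫) := by
  simp only [← formInnerₗ_apply, map_sub (formInnerₗ b), map_add, LinearMap.sub_apply]
  simp only [formInnerₗ_apply, formInner_rankOneForm, real_inner_comm y x]
  ring

variable {b} {R : V →ₗ[ℝ] V →ₗ[ℝ] V →ₗ[ℝ] V →ₗ[ℝ] ℝ}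

lemma IsAlgCurvatureTensor.secondKind_rankOneForm_sub (hR : IsAlgCurvatureTensor R) (x y : V) :
    secondKind b R (rankOneForm x x - rankOneForm y y) (rankOneForm x x - rankOneForm y y) =
      2 * R x y x y := by
  simp only [← secondKindₗ_apply, map_sub (secondKindₗ b R), map_sub (secondKindₗ b R _),
    LinearMap.sub_apply]
  simp only [secondKindₗ_apply, secondKind_rankOneForm, hR.apply_self_left,
    hR.apply_swap_right x y y x, hR.1 y x x y]
  ring

lemma IsAlgCurvatureTensor.secondKind_rankOneForm_add (hR : IsAlgCurvatureTensor R) (x y : V) :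
    secondKind b R (rankOneForm x y + rankOneForm y x) (rankOneForm x y + rankOneForm y x) =
      2 * R x y x y := by
  simp only [← secondKindₗ_apply, map_add, LinearMap.add_apply]
  simp only [secondKindₗ_apply, secondKind_rankOneForm, hR.apply_self_left, hR.1 y x y x,
    hR.apply_swap_right x y y x]
  ring

lemma IsTracelessSymForm.smul {φ : V →ₗ[ℝ] V →ₗ[ℝ] ℝ} (hφ : IsTracelessSymForm b φ) (c : ℝ) :
    IsTracelessSymForm b (c • φ) :=
  ⟨fun x y => by simp only [LinearMap.smul_apply, hφ.1 x y],
    by simp only [LinearMap.smul_apply, smul_eq_mul, ← Finset.mul_sum, hφ.2, mul_zero]⟩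

lemma isTracelessSymForm_rankOneForm_sub {x y : V} (h : ⟪x, x⟫ = ⟪y, y⟫) :
    IsTracelessSymForm b (rankOneForm x x - rankOneForm y y) :=
  ⟨fun u v => by simp only [LinearMap.sub_apply, rankOneForm_apply]; ring,
    by simp only [LinearMap.sub_apply, Finset.sum_sub_distrib, trace_rankOneForm, h, sub_self]⟩

lemma isTracelessSymForm_rankOneForm_add {x y : V} (h : ⟪x, y⟫ = 0) :
    IsTracelessSymForm b (rankOneForm x y + rankOneForm y x) :=
  ⟨fun u v => by simp only [LinearMap.add_apply, rankOneForm_apply]; ring, by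
    simp only [LinearMap.add_apply, Finset.sum_add_distrib, trace_rankOneForm, real_inner_comm x,
      h, add_zero]⟩

lemma kPosSecondKind.secondKind_add_pos (h2 : kPosSecondKind b R 2)
    {φ ψ : V →ₗ[ℝ] V →ₗ[ℝ] ℝ} (hφ : IsTracelessSymForm b φ) (hψ : IsTracelessSymForm b ψ)
    (hφφ : 0 < formInner b φ φ) (hψψ : formInner b ψ ψ = formInner b φ φ)
    (hφψ : formInner b φ ψ = 0) :
    0 < secondKind b R φ φ + secondKind b R ψ ψ := by
  set c := (√(formInner b φ φ))⁻¹
  have hc : c ^ 2 * formInner b φ φ = 1 := by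
    rw [inv_pow, Real.sq_sqrt hφφ.le, inv_mul_cancel₀ hφφ.ne']
  have hpos := h2 ![c • φ, c • ψ] (Fin.forall_fin_two.2 ⟨hφ.smul c, hψ.smul c⟩) (by
    simp [Fin.forall_fin_two, formInner_smul_smul, formInner_comm b ψ φ, hφψ, hψψ, hc])
  rw [Fin.sum_univ_two] at hpos
  simp only [Matrix.cons_val_zero, Matrix.cons_val_one, secondKind_smul_smul, ← mul_add] at hpos
  exact pos_of_mul_pos_right hpos (sq_nonneg c)

end BasisDependent

theorem stmt_3_general {n : ℕ}
    (b : OrthonormalBasis (Fin n) ℝ V)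
    (R : V →ₗ[ℝ] V →ₗ[ℝ] V →ₗ[ℝ] V →ₗ[ℝ] ℝ)
    (hR : IsAlgCurvatureTensor R)
    (h2 : kPosSecondKind b R 2) :
    ∀ x y : V, ‖x‖ = 1 → ‖y‖ = 1 → ⟪x, y⟫ = 0 → 0 < R x y x y := by
  intro x y hx hy hxy
  have hxx : ⟪x, x⟫ = 1 := by rw [real_inner_self_eq_norm_sq, hx, one_pow]
  have hyy : ⟪y, y⟫ = 1 := by rw [real_inner_self_eq_norm_sq, hy, one_pow]
  have key := h2.secondKind_add_pos
    (isTracelessSymForm_rankOneForm_sub (hxx.trans hyy.symm))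
    (isTracelessSymForm_rankOneForm_add hxy)
    (by rw [formInner_rankOneForm_sub_self, hxx, hyy, hxy]; norm_num)
    (by
      rw [formInner_rankOneForm_add_self, formInner_rankOneForm_sub_self, hxx, hyy, hxy]; norm_num)
    (by rw [formInner_rankOneForm_sub_add, hxy, mul_zero, zero_mul])
  rw [hR.secondKind_rankOneForm_sub, hR.secondKind_rankOneForm_add] at key
  linarith

theorem stmt_3 {n : ℕ} (hn : 4 ≤ n)
    (b : OrthonormalBasis (Fin n) ℝ V)
    (R : V →ₗ[ℝ] V →ₗ[ℝ] V →ₗ[ℝ] V →ₗ[ℝ] ℝ)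
    (hR : IsAlgCurvatureTensor R)
    (h2 : kPosSecondKind b R 2) :
    ∀ x y : V, ‖x‖ = 1 → ‖y‖ = 1 → ⟪x, y⟫ = 0 → 0 < R x y x y :=
  stmt_3_general b R hR h2
end

section
/- Let (V,⟨·,·⟩) be a real inner product space of dimension n ≥ 4 and let R be an algebraic curvature tensor on V. Then R has ((n-1)(n+2)/2)-nonnegative curvature operator of the second kind if and only if the scalar curvature S of R is nonnegative. -/
open scoped RealInnerProductSpace

variable {V : Type*} [NormedAddCommGroup V] [InnerProductSpace ℝ V]

/-
Since `(n - 1) * (n + 2) / 2` is the dimension of the space `S²₀` of traceless symmetric forms,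
an orthonormal tuple of that length is an orthonormal basis of `S²₀`, so the sum in question is
the trace of `R̊`. For any orthonormal basis `φ_a` of `S²₀` the sum
`Σ_a φ_a(e_i, e_l) φ_a(e_j, e_k)` is the matrix of the orthogonal projection onto `S²₀`, namely
`(δ_ij δ_kl + δ_ik δ_jl) / 2 - δ_jk δ_il / n`. Contracting it against `R_ijkl`, using only the
antisymmetry of `R`, gives `tr R̊ = (1/2 + 1/n) S`.
-/

theorem Orthonormal.sum_inner_mul_inner_of_card_eq_finrank {𝕜 E ι : Type*} [RCLike 𝕜]
    [NormedAddCommGroup E] [InnerProductSpace 𝕜 E] [FiniteDimensional 𝕜 E] [Fintype ι]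
    {u : ι → E} (hu : Orthonormal 𝕜 u) (hcard : Fintype.card ι = Module.finrank 𝕜 E)
    (x y : E) : ∑ a, inner 𝕜 x (u a) * inner 𝕜 (u a) y = inner 𝕜 x y := by
  have hspan := (hu.linearIndependent.span_eq_top_of_card_eq_finrank' hcard).ge
  simpa only [OrthonormalBasis.coe_mk] using
    (OrthonormalBasis.mk hu hspan).sum_inner_mul_inner x y

namespace CurvatureSecondKind

variable {n : ℕ}

def tracelessSym (n : ℕ) : Submodule ℝ (EuclideanSpace ℝ (Fin n × Fin n)) where
  carrier := {M | (∀ i j, M (i, j) = M (j, i)) ∧ ∑ i, M (i, i) = 0}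
  add_mem' := by
    rintro M N ⟨hM, hM'⟩ ⟨hN, hN'⟩
    refine ⟨fun i j => ?_, ?_⟩
    · simp [hM i j, hN i j]
    · simp [Finset.sum_add_distrib, hM', hN']
  zero_mem' := by simp
  smul_mem' := by
    rintro c M ⟨hM, hM'⟩
    refine ⟨fun i j => ?_, ?_⟩
    · simp [hM i j]
    · simp [← Finset.mul_sum, hM']

theorem inner_eq_sum_sum (x y : EuclideanSpace ℝ (Fin n × Fin n)) :
    ⟪x, y⟫ = ∑ i, ∑ j, x (i, j) * y (i, j) := by
  simp [PiLp.inner_apply, Fintype.sum_prod_type, mul_comm]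

/-- The orthogonal projection of the elementary matrix `E_il` onto `tracelessSym n`. -/
noncomputable def tracelessProj (i l : Fin n) : EuclideanSpace ℝ (Fin n × Fin n) :=
  WithLp.toLp 2 fun p =>
    (if p = (i, l) then 2⁻¹ else 0) + (if p = (l, i) then 2⁻¹ else 0)
      - if i = l ∧ p.1 = p.2 then (n : ℝ)⁻¹ else 0

theorem tracelessProj_mem (i l : Fin n) : tracelessProj i l ∈ tracelessSym n := by
  refine ⟨fun a c => ?_, ?_⟩
  · simp only [tracelessProj, Prod.mk.injEq]
    grind
  · have hn : (n : ℝ) ≠ 0 := Nat.cast_ne_zero.mpr (Fin.pos i).ne'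
    simp only [tracelessProj, Prod.mk.injEq, ite_and, Finset.sum_sub_distrib,
      Finset.sum_add_distrib, Finset.sum_ite_eq', Finset.sum_ite_irrel, Finset.mem_univ,
      if_true, Finset.sum_const, Finset.card_univ, Fintype.card_fin, nsmul_eq_mul]
    split_ifs <;> grind

theorem inner_tracelessProj (i l : Fin n) {M : EuclideanSpace ℝ (Fin n × Fin n)}
    (hM : M ∈ tracelessSym n) : ⟪tracelessProj i l, M⟫ = M (i, l) := by
  obtain ⟨hsym, htr⟩ := hM
  simp [inner_eq_sum_sum, tracelessProj, sub_mul, add_mul, Finset.sum_sub_distrib,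
    Finset.sum_add_distrib, ite_mul, ite_and, ← Finset.mul_sum, htr, hsym l i]
  ring

theorem sum_mul_tracelessProj_of_antisymm (R : Fin n → Fin n → Fin n → Fin n → ℝ)
    (hR : ∀ i j k l, R i j k l = - R j i k l) :
    ∑ i, ∑ j, ∑ k, ∑ l, R i j k l * tracelessProj j k (i, l)
      = (1 / 2 + (n : ℝ)⁻¹) * ∑ i, ∑ j, R i j i j := by
  have hdiag (i k : Fin n) : R i i k k = 0 := by linarith [hR i i k k]
  have hswap : ∑ i, ∑ j, R i j j i = - ∑ i, ∑ j, R i j i j := by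
    simp only [fun i j : Fin n => hR i j j i, Finset.sum_neg_distrib]
    rw [Finset.sum_comm]
  simp [tracelessProj, mul_sub, mul_add, Finset.sum_sub_distrib, Finset.sum_add_distrib,
    mul_ite, ite_and, hdiag, ← Finset.sum_mul, hswap]
  ring

noncomputable def traceSym2 (n : ℕ) : (Sym2 (Fin n) → ℝ) →ₗ[ℝ] ℝ :=
  ∑ i, LinearMap.proj s(i, i)

noncomputable def tracelessSymEquivKer (n : ℕ) :
    tracelessSym n ≃ₗ[ℝ] LinearMap.ker (traceSym2 n) where
  toFun M := ⟨Sym2.lift ⟨fun i j => (M : EuclideanSpace ℝ (Fin n × Fin n)) (i, j), M.2.1⟩, by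
    simpa [traceSym2] using M.2.2⟩
  map_add' M N := by ext s; induction s using Sym2.ind; simp
  map_smul' c M := by ext s; induction s using Sym2.ind; simp
  invFun f := ⟨WithLp.toLp 2 fun p => f.1 s(p.1, p.2),
    fun i j => congrArg f.1 Sym2.eq_swap, by simpa [traceSym2] using f.2⟩
  left_inv M := by ext; rfl
  right_inv f := by ext s; induction s using Sym2.ind; rfl

theorem finrank_tracelessSym (n : ℕ) :
    Module.finrank ℝ (tracelessSym n) = (n - 1) * (n + 2) / 2 := by
  rcases Nat.eq_zero_or_pos n with rfl | hn
  · exact Module.finrank_zero_of_subsingleton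
  have hsurj : Function.Surjective (traceSym2 n) := fun c =>
    ⟨Pi.single s(⟨0, hn⟩, ⟨0, hn⟩) c, by simp [traceSym2, Pi.single_apply]⟩
  have hrank := LinearMap.finrank_range_add_finrank_ker (traceSym2 n)
  rw [LinearMap.range_eq_top.mpr hsurj, finrank_top, Module.finrank_self,
    Module.finrank_fintype_fun_eq_card, Sym2.card, Fintype.card_fin, Nat.choose_two_right,
    Nat.add_sub_cancel, ← (tracelessSymEquivKer n).finrank_eq] at hrank
  have hprod : (n - 1) * (n + 2) + 2 = (n + 1) * n := by
    obtain ⟨m, rfl⟩ := Nat.exists_eq_add_of_lt hn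
    simp only [Nat.zero_add, Nat.add_sub_cancel]
    ring
  obtain ⟨m, hm⟩ : Even ((n + 1) * n) := mul_comm n (n + 1) ▸ Nat.even_mul_succ_self n
  omega

theorem sum_apply_mul_apply_of_orthonormal {ι : Type*} [Fintype ι] {u : ι → tracelessSym n}
    (hu : Orthonormal ℝ u) (hcard : Fintype.card ι = (n - 1) * (n + 2) / 2) (i l j k : Fin n) :
    ∑ a, (u a : EuclideanSpace ℝ (Fin n × Fin n)) (i, l) * (u a : EuclideanSpace ℝ _) (j, k)
      = tracelessProj j k (i, l) := by
  have hparseval := hu.sum_inner_mul_inner_of_card_eq_finrank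
    (hcard.trans (finrank_tracelessSym n).symm)
    ⟨tracelessProj i l, tracelessProj_mem i l⟩ ⟨tracelessProj j k, tracelessProj_mem j k⟩
  simp only [Submodule.coe_inner, real_inner_comm (tracelessProj j k),
    inner_tracelessProj _ _ (u _).2] at hparseval
  rwa [real_inner_comm, inner_tracelessProj _ _ (tracelessProj_mem j k)] at hparseval

variable (b : OrthonormalBasis (Fin n) ℝ V)

noncomputable def formMatrix (φ : V →ₗ[ℝ] V →ₗ[ℝ] ℝ) : EuclideanSpace ℝ (Fin n × Fin n) :=
  WithLp.toLp 2 fun p => φ (b p.1) (b p.2)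

noncomputable def formOfMatrix (M : EuclideanSpace ℝ (Fin n × Fin n)) : V →ₗ[ℝ] V →ₗ[ℝ] ℝ :=
  Matrix.toLinearMap₂ b.toBasis b.toBasis (Matrix.of fun i j => M (i, j))

theorem formMatrix_formOfMatrix (M : EuclideanSpace ℝ (Fin n × Fin n)) :
    formMatrix b (formOfMatrix b M) = M := by
  ext ⟨i, j⟩
  simp [formMatrix, formOfMatrix]

theorem isTracelessSymForm_iff_formMatrix_mem {φ : V →ₗ[ℝ] V →ₗ[ℝ] ℝ} :
    IsTracelessSymForm b φ ↔ formMatrix b φ ∈ tracelessSym n := by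
  refine ⟨fun ⟨hsym, htr⟩ => ⟨fun i j => hsym _ _, htr⟩, fun ⟨hsym, htr⟩ => ⟨?_, htr⟩⟩
  have hflip : φ = φ.flip := LinearMap.ext_basis b.toBasis b.toBasis fun i j => by
    simpa [formMatrix] using hsym i j
  exact fun x y => congr($hflip x y)

theorem formInner_eq_inner (φ ψ : V →ₗ[ℝ] V →ₗ[ℝ] ℝ) :
    formInner b φ ψ = ⟪formMatrix b φ, formMatrix b ψ⟫ := by
  simp [formInner, inner_eq_sum_sum, formMatrix]

theorem sum_secondKind_eq_mul_scalarCurv {R : V →ₗ[ℝ] V →ₗ[ℝ] V →ₗ[ℝ] V →ₗ[ℝ] ℝ}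
    (hR : ∀ x y z w, R x y z w = - R y x z w) {ι : Type*} [Fintype ι] [DecidableEq ι]
    (hcard : Fintype.card ι = (n - 1) * (n + 2) / 2) (φ : ι → V →ₗ[ℝ] V →ₗ[ℝ] ℝ)
    (hφ : ∀ a, IsTracelessSymForm b (φ a))
    (horth : ∀ a a', formInner b (φ a) (φ a') = if a = a' then 1 else 0) :
    ∑ a, secondKind b R (φ a) (φ a) = (1 / 2 + (n : ℝ)⁻¹) * scalarCurv b R := by
  let u : ι → tracelessSym n := fun a =>
    ⟨formMatrix b (φ a), (isTracelessSymForm_iff_formMatrix_mem b).mp (hφ a)⟩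
  have hu : Orthonormal ℝ u := orthonormal_iff_ite.mpr fun a a' => by
    simpa [u, formInner_eq_inner] using horth a a'
  calc ∑ a, secondKind b R (φ a) (φ a)
      = ∑ i, ∑ j, ∑ k, ∑ l, R (b i) (b j) (b k) (b l) *
          ∑ a, (u a : EuclideanSpace ℝ (Fin n × Fin n)) (i, l) *
            (u a : EuclideanSpace ℝ _) (j, k) := by
        simp only [secondKind, Finset.mul_sum, mul_assoc]
        rw [Finset.sum_comm]; refine Finset.sum_congr rfl fun i _ => ?_
        rw [Finset.sum_comm]; refine Finset.sum_congr rfl fun j _ => ?_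
        rw [Finset.sum_comm]; refine Finset.sum_congr rfl fun k _ => ?_
        rw [Finset.sum_comm]; rfl
    _ = ∑ i, ∑ j, ∑ k, ∑ l, R (b i) (b j) (b k) (b l) * tracelessProj j k (i, l) := by
        simp only [sum_apply_mul_apply_of_orthonormal hu hcard]
    _ = (1 / 2 + (n : ℝ)⁻¹) * scalarCurv b R :=
        sum_mul_tracelessProj_of_antisymm _ fun i j k l => hR _ _ _ _

theorem exists_orthonormal_isTracelessSymForm :
    ∃ φ : Fin ((n - 1) * (n + 2) / 2) → V →ₗ[ℝ] V →ₗ[ℝ] ℝ,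
      (∀ a, IsTracelessSymForm b (φ a)) ∧
        ∀ a a', formInner b (φ a) (φ a') = if a = a' then 1 else 0 := by
  let B := (stdOrthonormalBasis ℝ (tracelessSym n)).reindex (finCongr (finrank_tracelessSym n))
  refine ⟨fun a => formOfMatrix b (B a), fun a => ?_, fun a a' => ?_⟩
  · rw [isTracelessSymForm_iff_formMatrix_mem, formMatrix_formOfMatrix]
    exact (B a).2
  · rw [formInner_eq_inner, formMatrix_formOfMatrix, formMatrix_formOfMatrix,
      ← Submodule.coe_inner, orthonormal_iff_ite.mp B.orthonormal]

end CurvatureSecondKind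

theorem stmt_6_general {n : ℕ}
    (b : OrthonormalBasis (Fin n) ℝ V)
    (R : V →ₗ[ℝ] V →ₗ[ℝ] V →ₗ[ℝ] V →ₗ[ℝ] ℝ)
    (hR : IsAlgCurvatureTensor R) :
    kNonnegSecondKind b R ((n - 1) * (n + 2) / 2) ↔ 0 ≤ scalarCurv b R := by
  have hc : (0 : ℝ) < 1 / 2 + (n : ℝ)⁻¹ := by positivity
  have htrace := CurvatureSecondKind.sum_secondKind_eq_mul_scalarCurv b hR.1
    (Fintype.card_fin ((n - 1) * (n + 2) / 2))
  constructor
  · intro h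
    obtain ⟨φ, hφ, horth⟩ := CurvatureSecondKind.exists_orthonormal_isTracelessSymForm b
    have hsum := h φ hφ horth
    rwa [htrace φ hφ horth, mul_nonneg_iff_of_pos_left hc] at hsum
  · intro hS φ hφ horth
    rw [htrace φ hφ horth]
    exact mul_nonneg hc.le hS

theorem stmt_6 {n : ℕ} (hn : 4 ≤ n)
    (b : OrthonormalBasis (Fin n) ℝ V)
    (R : V →ₗ[ℝ] V →ₗ[ℝ] V →ₗ[ℝ] V →ₗ[ℝ] ℝ)
    (hR : IsAlgCurvatureTensor R) :
    kNonnegSecondKind b R ((n - 1) * (n + 2) / 2) ↔ 0 ≤ scalarCurv b R :=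
  stmt_6_general b R hR
end
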